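/- arXiv:1611.04055 — 2 statements merged into one kernel-verified Lean document; each statement's English description precedes it below -/
import Mathlib

section
/- Let (M,g) be a Riemannian d-manifold, σ a smooth function, Ω a positive smooth function. Define S(g,σ) := |dσ|²_g − (2/d)·σ·[Δ^g σ + Sc^g·σ/(2(d−1))]. Then S(Ω²g, Ωσ) = S(g,σ); i.e., the singular Yamabe operator S is conformally invariant under simultaneous rescaling of the metric by Ω² and the defining function by Ω. -/
open scoped BigOperators

/-- conformal invariance of the singular Yamabe operator
`S(g,σ) = |dσ|²_g − (2/d)·σ·[Δ^g σ + Sc^g·σ/(2(d−1))]` under `(g,σ) ↦ (Ω²g, Ωσ)`.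
The Riemannian data of `(M,g)` is encoded by the gradient pairing `B u v = g(∇u,∇v)`
(so `|dσ|²_g = B σ σ`), the Laplace–Beltrami operator `lap`, and the scalar curvature
`Sc`; the primed data are those of `g' = Ω²g`, and the standard conformal
transformation laws of the Laplacian, gradient pairing and scalar curvature are
hypotheses, together with the usual Leibniz rules. -/
theorem stmt0 {M : Type*} (d : ℕ) (hd : 3 ≤ d)
    (Ω σ Sc Sc' : M → ℝ) (hΩ : ∀ x, 0 < Ω x)
    (B B' : (M → ℝ) → (M → ℝ) → (M → ℝ))
    (lap lap' : (M → ℝ) → (M → ℝ))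
    (hBsymm : ∀ u v, B u v = B v u)
    (hBmul : ∀ u v w : M → ℝ, ∀ x,
      B (fun y => u y * v y) w x = u x * B v w x + v x * B u w x)
    (hlapmul : ∀ u v : M → ℝ, ∀ x,
      lap (fun y => u y * v y) x = u x * lap v x + v x * lap u x + 2 * B u v x)
    (hBlog : ∀ v : M → ℝ, ∀ x, B Ω v x = Ω x * B (fun y => Real.log (Ω y)) v x)
    (hlaplog : ∀ x, lap Ω x = Ω x * (lap (fun y => Real.log (Ω y)) x +
        B (fun y => Real.log (Ω y)) (fun y => Real.log (Ω y)) x))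
    (hB' : ∀ u v : M → ℝ, ∀ x, B' u v x = B u v x / Ω x ^ 2)
    (hlap' : ∀ u : M → ℝ, ∀ x, lap' u x =
        (lap u x + ((d : ℝ) - 2) * B (fun y => Real.log (Ω y)) u x) / Ω x ^ 2)
    (hSc' : ∀ x, Sc' x =
        (Sc x - 2 * ((d : ℝ) - 1) * lap (fun y => Real.log (Ω y)) x
          - ((d : ℝ) - 1) * ((d : ℝ) - 2) *
            B (fun y => Real.log (Ω y)) (fun y => Real.log (Ω y)) x) / Ω x ^ 2) :
    ∀ x, B' (fun y => Ω y * σ y) (fun y => Ω y * σ y) x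
        - (2 / (d : ℝ)) * (Ω x * σ x) *
            (lap' (fun y => Ω y * σ y) x + Sc' x * (Ω x * σ x) / (2 * ((d : ℝ) - 1)))
      = B σ σ x - (2 / (d : ℝ)) * σ x *
            (lap σ x + Sc x * σ x / (2 * ((d : ℝ) - 1))) := by
  intro x
  set L : M → ℝ := fun y => Real.log (Ω y) with hL
  have hΩx : Ω x ≠ 0 := (hΩ x).ne'
  have hd0 : (d : ℝ) ≠ 0 := by positivity
  have hd1 : (d : ℝ) - 1 ≠ 0 := by
    have : (3 : ℝ) ≤ (d : ℝ) := by exact_mod_cast hd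
    linarith
  have eσΩ : B σ Ω x = Ω x * B L σ x := by rw [hBsymm σ Ω]; exact hBlog σ x
  have eΩΩ : B Ω Ω x = Ω x * (Ω x * B L L x) := by
    rw [hBlog Ω x, hBsymm L Ω]; rw [hBlog L x]
  have eLΩ : B L Ω x = Ω x * B L L x := by rw [hBsymm L Ω]; exact hBlog L x
  have t1 : B σ (fun y => Ω y * σ y) x = Ω x * B σ σ x + σ x * (Ω x * B L σ x) := by
    rw [hBsymm σ (fun y => Ω y * σ y), hBmul Ω σ σ x, hBlog σ x]
  have t2 : B Ω (fun y => Ω y * σ y) x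
      = Ω x * (Ω x * B L σ x) + σ x * (Ω x * (Ω x * B L L x)) := by
    rw [hBsymm Ω (fun y => Ω y * σ y), hBmul Ω σ Ω x, eσΩ, eΩΩ]
  have e3 : B (fun y => Ω y * σ y) (fun y => Ω y * σ y) x
      = Ω x * (Ω x * B σ σ x + σ x * (Ω x * B L σ x))
        + σ x * (Ω x * (Ω x * B L σ x) + σ x * (Ω x * (Ω x * B L L x))) := by
    rw [hBmul Ω σ (fun y => Ω y * σ y) x, t1, t2]
  have e4 : lap (fun y => Ω y * σ y) x
      = Ω x * lap σ x + σ x * (Ω x * (lap L x + B L L x)) + 2 * (Ω x * B L σ x) := by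
    rw [hlapmul Ω σ x, hlaplog x, hBlog σ x]
  have e5 : B L (fun y => Ω y * σ y) x
      = Ω x * B L σ x + σ x * (Ω x * B L L x) := by
    rw [hBsymm L (fun y => Ω y * σ y), hBmul Ω σ L x, hBsymm σ L, hBlog L x]
  rw [hB', hlap', hSc', e3, e4, e5]
  field_simp
  ring
end

section
/- Let s be a unit defining function for a hypersurface Σ in d-dimensional Euclidean space, n = ∇s. Then along Σ: (i) ∇·n = (d−1)H; (ii) ∇_n(∇·n) = −I̊I_{ab}I̊I^{ab} − (d−1)H²; (iii) ∇_n²(∇·n) = 2·I̊I_{ab}I̊I^{bc}I̊I_c^a + 6H·I̊I_{ab}I̊I^{ab} + 2(d−1)H³. -/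
open scoped BigOperators

/-- The `i`-th partial derivative of a function on Euclidean `d`-space. -/
noncomputable def pd {d : ℕ} (i : Fin d) (f : EuclideanSpace ℝ (Fin d) → ℝ)
    (x : EuclideanSpace ℝ (Fin d)) : ℝ :=
  fderiv ℝ f x (EuclideanSpace.single i 1)

/-- The divergence `∇·n` of `n = ∇s`. -/
noncomputable def divn {d : ℕ} (s : EuclideanSpace ℝ (Fin d) → ℝ)
    (x : EuclideanSpace ℝ (Fin d)) : ℝ := ∑ a, pd a (pd a s) x

/-- The second fundamental form `II_{ab} = ∇_a^⊤ n_b` of the level sets of `s`,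
`n = ∇s`. -/
noncomputable def IIg {d : ℕ} (s : EuclideanSpace ℝ (Fin d) → ℝ) (a b : Fin d)
    (x : EuclideanSpace ℝ (Fin d)) : ℝ :=
  pd a (pd b s) x - pd a s x * ∑ c, pd c s x * pd c (pd b s) x

/-- The mean curvature `H = tr II/(d−1)`. -/
noncomputable def Hg {d : ℕ} (s : EuclideanSpace ℝ (Fin d) → ℝ)
    (x : EuclideanSpace ℝ (Fin d)) : ℝ := (∑ a, IIg s a a x) / ((d : ℝ) - 1)

/-- The trace-free second fundamental form `I̊I = II − H ḡ`, with
`ḡ_{ab} = δ_{ab} − n_a n_b` the induced metric. -/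
noncomputable def IIog {d : ℕ} (s : EuclideanSpace ℝ (Fin d) → ℝ) (a b : Fin d)
    (x : EuclideanSpace ℝ (Fin d)) : ℝ :=
  IIg s a b x - Hg s x * ((if a = b then (1:ℝ) else 0) - pd a s x * pd b s x)

/-! ### Auxiliary calculus lemmas for `pd` -/

section helpers
variable {d : ℕ} {f g : EuclideanSpace ℝ (Fin d) → ℝ} {x : EuclideanSpace ℝ (Fin d)}

lemma contDiff_pd (hf : ContDiff ℝ (⊤ : ℕ∞) f) (i : Fin d) : ContDiff ℝ (⊤ : ℕ∞) (pd i f) := by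
  have h1 : ContDiff ℝ (⊤ : ℕ∞) (fderiv ℝ f) := hf.fderiv_right (by simp)
  exact (ContinuousLinearMap.apply ℝ ℝ (EuclideanSpace.single i 1)).contDiff.comp h1

lemma pd_congr_nhds (h : f =ᶠ[nhds x] g) (i : Fin d) : pd i f x = pd i g x := by
  unfold pd; rw [h.fderiv_eq]

lemma pd_sum {ι : Type*} (u : Finset ι) (A : ι → EuclideanSpace ℝ (Fin d) → ℝ)
    (h : ∀ j ∈ u, DifferentiableAt ℝ (A j) x) (i : Fin d) :
    pd i (fun y => ∑ j ∈ u, A j y) x = ∑ j ∈ u, pd i (A j) x := by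
  unfold pd; rw [fderiv_fun_sum h]; simp

lemma pd_mul (hf : DifferentiableAt ℝ f x) (hg : DifferentiableAt ℝ g x) (i : Fin d) :
    pd i (fun y => f y * g y) x = pd i f x * g x + f x * pd i g x := by
  unfold pd; rw [fderiv_fun_mul hf hg]; simp; ring

lemma pd_neg (i : Fin d) : pd i (fun y => -(f y)) x = -(pd i f x) := by
  unfold pd; rw [fderiv_fun_neg]; simp

lemma pd_const (c : ℝ) (i : Fin d) : pd i (fun _ => c) x = 0 := by
  unfold pd; rw [fderiv_fun_const]; simp

lemma pd_pd_eq (hf : ContDiff ℝ (⊤ : ℕ∞) f) (a b : Fin d) :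
    pd a (pd b f) x
      = fderiv ℝ (fderiv ℝ f) x (EuclideanSpace.single a 1) (EuclideanSpace.single b 1) := by
  have h1 : ContDiff ℝ (⊤ : ℕ∞) (fderiv ℝ f) := hf.fderiv_right (by simp)
  have h2 : HasFDerivAt (fderiv ℝ f) (fderiv ℝ (fderiv ℝ f) x) x :=
    ((h1.differentiable (by simp)) x).hasFDerivAt
  have h3' := HasFDerivAt.comp (𝕜 := ℝ) x
    (ContinuousLinearMap.hasFDerivAt (ContinuousLinearMap.apply ℝ ℝ (EuclideanSpace.single b 1)))
    h2
  have h3 : HasFDerivAt (pd b f)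
      ((ContinuousLinearMap.apply ℝ ℝ (EuclideanSpace.single b 1)).comp
        (fderiv ℝ (fderiv ℝ f) x)) x := h3'
  show fderiv ℝ (pd b f) x (EuclideanSpace.single a 1) = _
  rw [h3.fderiv]; rfl

lemma pd_comm (hf : ContDiff ℝ (⊤ : ℕ∞) f) (a b : Fin d) :
    pd a (pd b f) x = pd b (pd a f) x := by
  rw [pd_pd_eq hf, pd_pd_eq hf]
  exact second_derivative_symmetric (fun y => ((hf.differentiable (by simp)) y).hasFDerivAt)
    (((hf.fderiv_right (by simp : ((⊤ : ℕ∞) : WithTop ℕ∞)+1 ≤ ((⊤ : ℕ∞) : WithTop ℕ∞))).differentiable (by simp) x).hasFDerivAt) _ _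

end helpers

/-! ### Algebraic lemmas about the induced metric projector -/

noncomputable def Pm {d : ℕ} (N : Fin d → ℝ) (a b : Fin d) : ℝ :=
  (if a = b then (1:ℝ) else 0) - N a * N b

section alg
variable {d : ℕ} {S : Fin d → Fin d → ℝ} {N : Fin d → ℝ} {H : ℝ}

lemma Pm_symm (N : Fin d → ℝ) (a b : Fin d) : Pm N a b = Pm N b a := by
  unfold Pm
  by_cases h : a = b
  · simp [h, mul_comm]
  · simp [h, Ne.symm h, mul_comm]

lemma q5 (hNS : ∀ b, ∑ c, N c * S c b = 0) (a b : Fin d) :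
    ∑ c, Pm N a c * S c b = S a b := by
  unfold Pm
  have e : ∀ c, ((if a = c then (1:ℝ) else 0) - N a * N c) * S c b
      = (if a = c then S c b else 0) - N a * (N c * S c b) := by
    intro c; by_cases h : a = c <;> simp [h] <;> ring
  rw [Finset.sum_congr rfl fun c _ => e c, Finset.sum_sub_distrib,
    Finset.sum_ite_eq Finset.univ a (fun c => S c b), ← Finset.mul_sum, hNS b]
  simp

lemma q4 (hsym : ∀ a b, S a b = S b a) (hNS : ∀ b, ∑ c, N c * S c b = 0) (a b : Fin d) :
    ∑ c, S a c * Pm N c b = S a b := by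
  unfold Pm
  have e : ∀ c, S a c * ((if c = b then (1:ℝ) else 0) - N c * N b)
      = (if c = b then S a c else 0) - (N c * S c a) * N b := by
    intro c; rw [hsym a c]; by_cases h : c = b <;> simp [h] <;> ring
  rw [Finset.sum_congr rfl fun c _ => e c, Finset.sum_sub_distrib,
    Finset.sum_ite_eq' Finset.univ b (fun c => S a c), ← Finset.sum_mul, hNS a]
  simp

lemma q3 (hN1 : ∑ a, N a ^ 2 = 1) (a b : Fin d) :
    ∑ c, Pm N a c * Pm N c b = Pm N a b := by
  unfold Pm
  have e : ∀ c, ((if a = c then (1:ℝ) else 0) - N a * N c) *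
        ((if c = b then (1:ℝ) else 0) - N c * N b)
      = ((if a = c then (if c = b then (1:ℝ) else 0) else 0)
          - (if a = c then N c * N b else 0))
        - ((if c = b then N a * N c else 0) - N a * N b * N c ^ 2) := by
    intro c
    by_cases h1 : a = c <;> by_cases h2 : c = b <;>
      simp [h1, h2] <;> (try split_ifs) <;> ring
  rw [Finset.sum_congr rfl fun c _ => e c, Finset.sum_sub_distrib, Finset.sum_sub_distrib,
    Finset.sum_sub_distrib, Finset.sum_ite_eq Finset.univ a,
    Finset.sum_ite_eq Finset.univ a (fun c => N c * N b),
    Finset.sum_ite_eq' Finset.univ b (fun c => N a * N c), ← Finset.mul_sum, hN1]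
  simp <;> ring

lemma q1 (hsym : ∀ a b, S a b = S b a) (hNS : ∀ b, ∑ c, N c * S c b = 0) :
    ∑ a, ∑ b, S a b * Pm N a b = ∑ a, S a a := by
  refine Finset.sum_congr rfl fun a _ => ?_
  have e : ∑ b, S a b * Pm N a b = ∑ b, S a b * Pm N b a :=
    Finset.sum_congr rfl fun b _ => by rw [Pm_symm N a b]
  rw [e]; exact q4 hsym hNS a a

lemma q2 (hN1 : ∑ a, N a ^ 2 = 1) :
    ∑ a, ∑ b, Pm N a b * Pm N a b = (d : ℝ) - 1 := by
  have step : ∀ a : Fin d, ∑ b, Pm N a b * Pm N a b = 1 - N a ^ 2 := by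
    intro a
    have e : ∑ b, Pm N a b * Pm N a b = ∑ b, Pm N a b * Pm N b a :=
      Finset.sum_congr rfl fun b _ => by rw [← Pm_symm N a b]
    rw [e, q3 hN1 a a]
    unfold Pm; simp [pow_two]
  rw [Finset.sum_congr rfl fun a _ => step a, Finset.sum_sub_distrib, hN1]
  simp [mul_comm]

lemma alg2 (hsym : ∀ a b, S a b = S b a) (hNS : ∀ b, ∑ c, N c * S c b = 0)
    (hN1 : ∑ a, N a ^ 2 = 1) (htr : ∑ a, S a a = ((d:ℝ) - 1) * H) :
    ∑ a, ∑ b, (S a b - H * Pm N a b) * (S a b - H * Pm N a b)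
      = (∑ a, ∑ b, S a b * S a b) - ((d:ℝ) - 1) * H ^ 2 := by
  have e : ∀ a b : Fin d, (S a b - H * Pm N a b) * (S a b - H * Pm N a b)
      = S a b * S a b - H * (2 * (S a b * Pm N a b)) + H ^ 2 * (Pm N a b * Pm N a b) := by
    intro a b; ring
  rw [Finset.sum_congr rfl fun a _ => Finset.sum_congr rfl fun b _ => e a b]
  simp only [Finset.sum_add_distrib, Finset.sum_sub_distrib, ← Finset.mul_sum]
  rw [q2 hN1, q1 hsym hNS, htr]
  ring

lemma t3lem (hsym : ∀ a b, S a b = S b a) (hNS : ∀ b, ∑ c, N c * S c b = 0) :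
    ∑ a, ∑ b, Pm N a b * (∑ c, S b c * S c a) = ∑ a, ∑ b, S a b * S a b := by
  have step : ∀ a : Fin d, ∑ b, Pm N a b * (∑ c, S b c * S c a) = ∑ c, S a c * S c a := by
    intro a
    have e1 : ∑ b, Pm N a b * (∑ c, S b c * S c a)
        = ∑ b, ∑ c, (Pm N a b * S b c) * S c a := by
      refine Finset.sum_congr rfl fun b _ => ?_
      rw [Finset.mul_sum]
      exact Finset.sum_congr rfl fun c _ => by ring
    rw [e1, Finset.sum_comm]
    refine Finset.sum_congr rfl fun c _ => ?_
    rw [← Finset.sum_mul, q5 hNS a c]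
  rw [Finset.sum_congr rfl fun a _ => step a]
  exact Finset.sum_congr rfl fun a _ => Finset.sum_congr rfl fun c _ => by rw [hsym c a]

lemma alg3 (hsym : ∀ a b, S a b = S b a) (hNS : ∀ b, ∑ c, N c * S c b = 0)
    (hN1 : ∑ a, N a ^ 2 = 1) (htr : ∑ a, S a a = ((d:ℝ) - 1) * H) :
    ∑ a, ∑ b, ∑ c, (S a b - H * Pm N a b) * (S b c - H * Pm N b c) * (S c a - H * Pm N c a)
      = (∑ a, ∑ b, S a b * (∑ c, S b c * S c a))
        - 3 * H * (∑ a, ∑ b, S a b * S a b) + 2 * ((d:ℝ) - 1) * H ^ 3 := by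
  have inner : ∀ a b : Fin d,
      ∑ c, (S a b - H * Pm N a b) * (S b c - H * Pm N b c) * (S c a - H * Pm N c a)
      = S a b * (∑ c, S b c * S c a) - H * (Pm N a b * (∑ c, S b c * S c a))
        - H * (2 * (S a b * S b a)) + H ^ 2 * (2 * (Pm N a b * S b a))
        + H ^ 2 * (S a b * Pm N b a) - H ^ 3 * (Pm N a b * Pm N b a) := by
    intro a b
    have e3 : ∀ c, (S a b - H * Pm N a b) * (S b c - H * Pm N b c) * (S c a - H * Pm N c a)
        = S a b * (S b c * S c a) - H * (Pm N a b * (S b c * S c a))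
          - H * (S a b * (S b c * Pm N c a)) - H * (S a b * (Pm N b c * S c a))
          + H ^ 2 * (S a b * (Pm N b c * Pm N c a)) + H ^ 2 * (Pm N a b * (S b c * Pm N c a))
          + H ^ 2 * (Pm N a b * (Pm N b c * S c a))
          - H ^ 3 * (Pm N a b * (Pm N b c * Pm N c a)) := by
      intro c; ring
    rw [Finset.sum_congr rfl fun c _ => e3 c]
    simp only [Finset.sum_add_distrib, Finset.sum_sub_distrib, ← Finset.mul_sum]
    rw [q4 hsym hNS b a, q5 hNS b a, q3 hN1 b a]
    ring
  rw [Finset.sum_congr rfl fun a _ => Finset.sum_congr rfl fun b _ => inner a b]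
  simp only [Finset.sum_add_distrib, Finset.sum_sub_distrib, ← Finset.mul_sum]
  rw [t3lem hsym hNS]
  have h1 : ∑ a, ∑ b, S a b * S b a = ∑ a, ∑ b, S a b * S a b :=
    Finset.sum_congr rfl fun a _ => Finset.sum_congr rfl fun b _ => by rw [hsym b a]
  have h2 : ∑ a, ∑ b, Pm N a b * S b a = ((d:ℝ) - 1) * H := by
    rw [Finset.sum_congr rfl fun a _ => Finset.sum_congr rfl fun b _ =>
      show Pm N a b * S b a = S a b * Pm N a b from by rw [hsym b a]; ring]
    rw [q1 hsym hNS, htr]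
  have h3 : ∑ a, ∑ b, S a b * Pm N b a = ((d:ℝ) - 1) * H := by
    rw [Finset.sum_congr rfl fun a _ => Finset.sum_congr rfl fun b _ =>
      show S a b * Pm N b a = S a b * Pm N a b from by rw [← Pm_symm N a b]]
    rw [q1 hsym hNS, htr]
  have h4 : ∑ a, ∑ b, Pm N a b * Pm N b a = (d:ℝ) - 1 := by
    rw [Finset.sum_congr rfl fun a _ => Finset.sum_congr rfl fun b _ =>
      show Pm N a b * Pm N b a = Pm N a b * Pm N a b from by rw [← Pm_symm N a b]]
    exact q2 hN1
  rw [h1, h2, h3, h4]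
  ring

end alg

/-! ### Differential consequences of the unit-normal condition -/

section mainsec
variable {d : ℕ} {s : EuclideanSpace ℝ (Fin d) → ℝ} {U : Set (EuclideanSpace ℝ (Fin d))}

lemma hC1lem (hs : ContDiff ℝ (⊤ : ℕ∞) s) (hU : IsOpen U)
    (hunit : ∀ x ∈ U, ∑ a, pd a s x ^ 2 = 1) :
    ∀ y ∈ U, ∀ b : Fin d, ∑ a, pd a s y * pd b (pd a s) y = 0 := by
  have hdiffN : ∀ (a : Fin d) y, DifferentiableAt ℝ (pd a s) y :=
    fun a y => ((contDiff_pd hs a).differentiable (by simp)) y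
  intro y hy b
  have heq : (fun z => ∑ a, pd a s z ^ 2) =ᶠ[nhds y] (fun _ => (1:ℝ)) := by
    filter_upwards [hU.mem_nhds hy] with z hz using hunit z hz
  have h0 : pd b (fun z => ∑ a, pd a s z ^ 2) y = 0 := by
    rw [pd_congr_nhds heq b]; exact pd_const 1 b
  rw [pd_sum Finset.univ (fun a z => pd a s z ^ 2)
    (fun a _ => (hdiffN a y).pow 2) b] at h0
  have h1 : ∀ a : Fin d, pd b (fun z => pd a s z ^ 2) y
      = pd b (pd a s) y * pd a s y + pd a s y * pd b (pd a s) y := by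
    intro a
    have e : (fun z => pd a s z ^ 2) = fun z => pd a s z * pd a s z := by
      funext z; ring
    rw [e, pd_mul (hdiffN a y) (hdiffN a y) b]
  rw [Finset.sum_congr rfl fun a _ => h1 a] at h0
  have h2 : ∑ a, (pd b (pd a s) y * pd a s y + pd a s y * pd b (pd a s) y)
      = 2 * ∑ a, pd a s y * pd b (pd a s) y := by
    rw [Finset.mul_sum]
    exact Finset.sum_congr rfl fun a _ => by ring
  rw [h2] at h0
  linarith

lemma hC2lem (hs : ContDiff ℝ (⊤ : ℕ∞) s) (hU : IsOpen U)
    (hunit : ∀ x ∈ U, ∑ a, pd a s x ^ 2 = 1) :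
    ∀ y ∈ U, ∀ b c : Fin d,
      ∑ a, (pd c (pd a s) y * pd b (pd a s) y + pd a s y * pd c (pd b (pd a s)) y) = 0 := by
  have hdiffN : ∀ (a : Fin d) y, DifferentiableAt ℝ (pd a s) y :=
    fun a y => ((contDiff_pd hs a).differentiable (by simp)) y
  have hdiffS : ∀ (a b : Fin d) y, DifferentiableAt ℝ (pd a (pd b s)) y :=
    fun a b y => ((contDiff_pd (contDiff_pd hs b) a).differentiable (by simp)) y
  intro y hy b c
  have heq : (fun z => ∑ a, pd a s z * pd b (pd a s) z) =ᶠ[nhds y] (fun _ => (0:ℝ)) := by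
    filter_upwards [hU.mem_nhds hy] with z hz using hC1lem hs hU hunit z hz b
  have h0 : pd c (fun z => ∑ a, pd a s z * pd b (pd a s) z) y = 0 := by
    rw [pd_congr_nhds heq c]; exact pd_const 0 c
  rw [pd_sum Finset.univ (fun a z => pd a s z * pd b (pd a s) z)
    (fun a _ => (hdiffN a y).mul (hdiffS b a y)) c] at h0
  rw [← h0]
  exact Finset.sum_congr rfl fun a _ => (pd_mul (hdiffN a y) (hdiffS b a y) c).symm

lemma key2 (hs : ContDiff ℝ (⊤ : ℕ∞) s) (hU : IsOpen U)
    (hunit : ∀ x ∈ U, ∑ a, pd a s x ^ 2 = 1) :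
    ∀ y ∈ U, ∑ a, pd a s y * pd a (divn s) y
      = -(∑ b, ∑ c, pd b (pd c s) y * pd b (pd c s) y) := by
  intro y hy
  have hdiffS : ∀ (a b : Fin d) (z : EuclideanSpace ℝ (Fin d)),
      DifferentiableAt ℝ (pd a (pd b s)) z :=
    fun a b z => ((contDiff_pd (contDiff_pd hs b) a).differentiable (by simp)) z
  have hSfun : ∀ a b : Fin d, pd a (pd b s) = pd b (pd a s) :=
    fun a b => funext fun z => pd_comm hs a b
  have hdvn : ∀ (a : Fin d), pd a (divn s) y = ∑ b, pd a (pd b (pd b s)) y := by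
    intro a
    have e : divn s = fun z => ∑ b, pd b (pd b s) z := rfl
    rw [e, pd_sum Finset.univ (fun b z => pd b (pd b s) z) (fun b _ => hdiffS b b y) a]
  calc ∑ a, pd a s y * pd a (divn s) y
      = ∑ a, ∑ b, pd a s y * pd a (pd b (pd b s)) y := by
        refine Finset.sum_congr rfl fun a _ => ?_
        rw [hdvn a, Finset.mul_sum]
    _ = ∑ b, ∑ a, pd a s y * pd b (pd b (pd a s)) y := by
        rw [Finset.sum_comm]
        refine Finset.sum_congr rfl fun b _ => Finset.sum_congr rfl fun a _ => ?_
        congr 1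
        rw [pd_comm (contDiff_pd hs b) a b, hSfun a b]
    _ = ∑ b, -(∑ a, pd b (pd a s) y * pd b (pd a s) y) := by
        refine Finset.sum_congr rfl fun b _ => ?_
        have h2 := hC2lem hs hU hunit y hy b b
        have hsplit : ∑ a, (pd b (pd a s) y * pd b (pd a s) y
              + pd a s y * pd b (pd b (pd a s)) y)
            = (∑ a, pd b (pd a s) y * pd b (pd a s) y)
              + ∑ a, pd a s y * pd b (pd b (pd a s)) y := Finset.sum_add_distrib
        linarith [h2, hsplit]
    _ = -(∑ b, ∑ c, pd b (pd c s) y * pd b (pd c s) y) := by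
        rw [← Finset.sum_neg_distrib]

end mainsec

/-- for a unit defining function `s` of a hypersurface `Σ` in
`d`-dimensional Euclidean space (`|∇s|² = 1` on an open set `U ⊇ Σ`, with
`Σ` the zero locus of `s` in `U`) and `n = ∇s`, along `Σ`:
(i) `∇·n = (d−1)H`;
(ii) `∇_n(∇·n) = −I̊I_{ab}I̊I^{ab} − (d−1)H²`;
(iii) `∇_n²(∇·n) = 2 I̊I_{ab}I̊I^{bc}I̊I_c^a + 6H I̊I_{ab}I̊I^{ab} + 2(d−1)H³`. -/
theorem stmt15 (d : ℕ) (hd : 2 ≤ d)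
    (s : EuclideanSpace ℝ (Fin d) → ℝ) (hs : ContDiff ℝ (⊤ : ℕ∞) s)
    (U : Set (EuclideanSpace ℝ (Fin d))) (hU : IsOpen U)
    (hunit : ∀ x ∈ U, ∑ a, pd a s x ^ 2 = 1) :
    ∀ x ∈ U, s x = 0 →
      (divn s x = ((d : ℝ) - 1) * Hg s x) ∧
      ((∑ a, pd a s x * pd a (divn s) x)
          = -(∑ a, ∑ b, IIog s a b x * IIog s a b x) - ((d : ℝ) - 1) * Hg s x ^ 2) ∧
      ((∑ a, pd a s x * pd a (fun y => ∑ b, pd b s y * pd b (divn s) y) x)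
          = 2 * (∑ a, ∑ b, ∑ c, IIog s a b x * IIog s b c x * IIog s c a x)
            + 6 * Hg s x * (∑ a, ∑ b, IIog s a b x * IIog s a b x)
            + 2 * ((d : ℝ) - 1) * Hg s x ^ 3) := by
  intro x hx _
  have hd1 : ((d:ℝ) - 1) ≠ 0 := by
    have h2 : (2:ℝ) ≤ (d:ℝ) := by exact_mod_cast hd
    intro h; linarith
  have hdiffS : ∀ (a b : Fin d) (z : EuclideanSpace ℝ (Fin d)),
      DifferentiableAt ℝ (pd a (pd b s)) z :=
    fun a b z => ((contDiff_pd (contDiff_pd hs b) a).differentiable (by simp)) z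
  have hSsym : ∀ (a b : Fin d) (y : EuclideanSpace ℝ (Fin d)),
      pd a (pd b s) y = pd b (pd a s) y := fun a b y => pd_comm hs a b
  have hSfun : ∀ a b : Fin d, pd a (pd b s) = pd b (pd a s) :=
    fun a b => funext fun z => hSsym a b z
  have hC1 := hC1lem hs hU hunit
  have hC2 := hC2lem hs hU hunit
  -- II = Hessian on U
  have hIIg : ∀ y ∈ U, ∀ a b : Fin d, IIg s a b y = pd a (pd b s) y := by
    intro y hy a b
    unfold IIg
    have e : ∑ c, pd c s y * pd c (pd b s) y = ∑ c, pd c s y * pd b (pd c s) y :=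
      Finset.sum_congr rfl fun c _ => by rw [hSsym c b y]
    rw [e, hC1 y hy b]
    ring
  -- hypotheses for the algebraic lemmas, at the point x
  have hsymx : ∀ a b : Fin d, pd a (pd b s) x = pd b (pd a s) x := fun a b => hSsym a b x
  have hNSx : ∀ b : Fin d, ∑ c, pd c s x * pd c (pd b s) x = 0 := by
    intro b
    have e : ∑ c, pd c s x * pd c (pd b s) x = ∑ c, pd c s x * pd b (pd c s) x :=
      Finset.sum_congr rfl fun c _ => by rw [hSsym c b x]
    rw [e]; exact hC1 x hx b
  have hN1x : ∑ a, pd a s x ^ 2 = 1 := hunit x hx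
  have htr : ∑ a, pd a (pd a s) x = ((d:ℝ) - 1) * Hg s x := by
    have hHx : Hg s x = (∑ a, pd a (pd a s) x) / ((d:ℝ) - 1) := by
      unfold Hg
      congr 1
      exact Finset.sum_congr rfl fun a _ => hIIg x hx a a
    rw [hHx]
    field_simp
  have hIIog : ∀ a b : Fin d, IIog s a b x
      = pd a (pd b s) x - Hg s x * Pm (fun c => pd c s x) a b := by
    intro a b
    unfold IIog Pm
    rw [hIIg x hx a b]
  have hA2 : ∑ a, ∑ b, IIog s a b x * IIog s a b x
      = (∑ a, ∑ b, pd a (pd b s) x * pd a (pd b s) x) - ((d:ℝ) - 1) * Hg s x ^ 2 := by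
    have e : ∑ a, ∑ b, IIog s a b x * IIog s a b x
        = ∑ a, ∑ b, (pd a (pd b s) x - Hg s x * Pm (fun c => pd c s x) a b)
            * (pd a (pd b s) x - Hg s x * Pm (fun c => pd c s x) a b) :=
      Finset.sum_congr rfl fun a _ => Finset.sum_congr rfl fun b _ => by rw [hIIog a b]
    rw [e]
    exact alg2 (S := fun a b => pd a (pd b s) x) (N := fun c => pd c s x)
      hsymx hNSx hN1x htr
  refine ⟨htr, ?_, ?_⟩
  · -- statement (ii)
    rw [key2 hs hU hunit x hx, hA2]
    ring
  · -- statement (iii)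
    have hA3 : ∑ a, ∑ b, ∑ c, IIog s a b x * IIog s b c x * IIog s c a x
        = (∑ a, ∑ b, pd a (pd b s) x * (∑ c, pd b (pd c s) x * pd c (pd a s) x))
          - 3 * Hg s x * (∑ a, ∑ b, pd a (pd b s) x * pd a (pd b s) x)
          + 2 * ((d:ℝ) - 1) * Hg s x ^ 3 := by
      have e : ∑ a, ∑ b, ∑ c, IIog s a b x * IIog s b c x * IIog s c a x
          = ∑ a, ∑ b, ∑ c,
              (pd a (pd b s) x - Hg s x * Pm (fun i => pd i s x) a b)
              * (pd b (pd c s) x - Hg s x * Pm (fun i => pd i s x) b c)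
              * (pd c (pd a s) x - Hg s x * Pm (fun i => pd i s x) c a) :=
        Finset.sum_congr rfl fun a _ => Finset.sum_congr rfl fun b _ =>
          Finset.sum_congr rfl fun c _ => by rw [hIIog a b, hIIog b c, hIIog c a]
      rw [e]
      exact alg3 (S := fun a b => pd a (pd b s) x) (N := fun i => pd i s x)
        hsymx hNSx hN1x htr
    -- derivative of ∑ n_b ∂_b(∇·n) equals derivative of −|Hess|²
    have hFG : ∀ a : Fin d,
        pd a (fun y => ∑ b, pd b s y * pd b (divn s) y) x
        = pd a (fun y => -(∑ b, ∑ c, pd b (pd c s) y * pd b (pd c s) y)) x := by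
      intro a
      refine pd_congr_nhds ?_ a
      filter_upwards [hU.mem_nhds hx] with z hz using key2 hs hU hunit z hz
    have hpdG : ∀ a : Fin d,
        pd a (fun y => -(∑ b, ∑ c, pd b (pd c s) y * pd b (pd c s) y)) x
        = -(∑ b, ∑ c, (pd a (pd b (pd c s)) x * pd b (pd c s) x
            + pd b (pd c s) x * pd a (pd b (pd c s)) x)) := by
      intro a
      rw [pd_neg a]
      congr 1
      rw [pd_sum Finset.univ (fun b z => ∑ c, pd b (pd c s) z * pd b (pd c s) z)
        (fun b _ => DifferentiableAt.fun_sum (fun c _ => (hdiffS b c x).mul (hdiffS b c x))) a]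
      refine Finset.sum_congr rfl fun b _ => ?_
      rw [pd_sum Finset.univ (fun c z => pd b (pd c s) z * pd b (pd c s) z)
        (fun c _ => (hdiffS b c x).mul (hdiffS b c x)) a]
      exact Finset.sum_congr rfl fun c _ => pd_mul (hdiffS b c x) (hdiffS b c x) a
    have hTsym : ∀ a b c : Fin d,
        pd a (pd b (pd c s)) x = pd b (pd c (pd a s)) x := by
      intro a b c
      rw [pd_comm (contDiff_pd hs c) a b]
      congr 1
      rw [hSfun a c]
    have hsum3 : ∀ b c : Fin d, ∑ a, pd a s x * pd b (pd c (pd a s)) x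
        = -(∑ a, pd b (pd a s) x * pd c (pd a s) x) := by
      intro b c
      have h2 := hC2 x hx c b
      have hsplit : ∑ a, (pd b (pd a s) x * pd c (pd a s) x
            + pd a s x * pd b (pd c (pd a s)) x)
          = (∑ a, pd b (pd a s) x * pd c (pd a s) x)
            + ∑ a, pd a s x * pd b (pd c (pd a s)) x := Finset.sum_add_distrib
      linarith [h2, hsplit]
    have step1 : ∀ a : Fin d, pd a s x * pd a (fun y => ∑ b, pd b s y * pd b (divn s) y) x
        = -(∑ b, ∑ c, 2 * (pd b (pd c s) x * (pd a s x * pd b (pd c (pd a s)) x))) := by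
      intro a
      rw [hFG a, hpdG a, mul_neg]
      congr 1
      rw [Finset.mul_sum]
      refine Finset.sum_congr rfl fun b _ => ?_
      rw [Finset.mul_sum]
      refine Finset.sum_congr rfl fun c _ => ?_
      rw [hTsym a b c]
      ring
    have main3 : ∑ a, pd a s x * pd a (fun y => ∑ b, pd b s y * pd b (divn s) y) x
        = 2 * (∑ a, ∑ b, pd a (pd b s) x * (∑ c, pd b (pd c s) x * pd c (pd a s) x)) := by
      calc ∑ a, pd a s x * pd a (fun y => ∑ b, pd b s y * pd b (divn s) y) x
          = -(∑ a, ∑ b, ∑ c,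
              2 * (pd b (pd c s) x * (pd a s x * pd b (pd c (pd a s)) x))) := by
            rw [← Finset.sum_neg_distrib]
            exact Finset.sum_congr rfl fun a _ => step1 a
        _ = -(∑ b, ∑ c, ∑ a,
              2 * (pd b (pd c s) x * (pd a s x * pd b (pd c (pd a s)) x))) := by
            congr 1
            rw [Finset.sum_comm]
            exact Finset.sum_congr rfl fun b _ => Finset.sum_comm
        _ = ∑ b, ∑ c, 2 * (pd b (pd c s) x * (∑ a, pd b (pd a s) x * pd c (pd a s) x)) := by
            rw [← Finset.sum_neg_distrib]
            refine Finset.sum_congr rfl fun b _ => ?_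
            rw [← Finset.sum_neg_distrib]
            refine Finset.sum_congr rfl fun c _ => ?_
            have e : ∑ a, 2 * (pd b (pd c s) x * (pd a s x * pd b (pd c (pd a s)) x))
                = 2 * (pd b (pd c s) x * (∑ a, pd a s x * pd b (pd c (pd a s)) x)) := by
              simp only [← Finset.mul_sum]
            rw [e, hsum3 b c]
            ring
        _ = 2 * (∑ b, ∑ c, pd b (pd c s) x * (∑ a, pd b (pd a s) x * pd c (pd a s) x)) := by
            simp only [← Finset.mul_sum]
        _ = 2 * (∑ a, ∑ b, pd a (pd b s) x * (∑ c, pd b (pd c s) x * pd c (pd a s) x)) := by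
            congr 1
            refine Finset.sum_congr rfl fun a _ => Finset.sum_congr rfl fun b _ => ?_
            congr 1
            refine Finset.sum_congr rfl fun c _ => ?_
            rw [hsymx a c]
            ring
    rw [main3, hA3, hA2]
    ring
end
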